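/- Let n ≥ 1. Every complex linear subspace W of sl(2n,ℂ) such that sp(2n,ℂ) ⊆ W and [X,Y] ∈ W for all X ∈ sp(2n,ℂ) and Y ∈ W is equal to sp(2n,ℂ) or to sl(2n,ℂ). (For n ≥ 2 this says that the quotient sl(2n,ℂ)/sp(2n,ℂ), with the adjoint action of sp(2n,ℂ), is an irreducible sp(2n,ℂ)-module.) -/

import Mathlib

open Matrix

/-- The standard symplectic matrix `J₀ = [[0, I], [−I, 0]]` (in `n × n` block form)
as a complex `2n × 2n` matrix. -/
def stdJ (n : ℕ) : Matrix (Fin n ⊕ Fin n) (Fin n ⊕ Fin n) ℂ :=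
  Matrix.fromBlocks 0 1 (-1) 0

/-!
Every `X ∈ 𝔤𝔩(2n)` is `S + [[A, B], [C, Aᵀ]]` with `S ∈ 𝔰𝔭(2n)` and `B`, `C` skew, and
`tr X = 2 tr A`. If `W ⊄ 𝔰𝔭`, it contains such a block matrix `Z ≠ 0` with `tr A = 0`.
Brackets with `e = [[0, I], [0, 0]]` and `f = [[0, 0], [I, 0]]` (both in `𝔰𝔭`) move the `B`- or
`C`-block of `Z` to the diagonal, giving a non-scalar `A` with `diag(A, Aᵀ) ∈ W`. Since
`diag(P, -Pᵀ) ∈ 𝔰𝔭`, the matrices `A` with `diag(A, Aᵀ) ∈ W` form an `ad 𝔤𝔩ₙ`-stable subspace,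
and such a subspace containing a non-scalar matrix contains `𝔰𝔩ₙ`: a double bracket with an
elementary matrix isolates some `E_pq`, and brackets of elementary matrices give all the others.
Finally `⁅e, diag(A, Aᵀ)⁆` and `⁅f, diag(A, Aᵀ)⁆` produce every skew off-diagonal block, so
`W ⊇ 𝔰𝔩(2n)`.
-/

namespace SlSp

section GeneralLinear

variable {ι K : Type*} [Fintype ι] [DecidableEq ι] [Field K]

lemma lie_single_lie_single_self {p q : ι} (hpq : p ≠ q) (X : Matrix ι ι K) :
    ⁅single p q (1 : K), ⁅single p q (1 : K), X⁆⁆ = (-2 * X q p) • single p q 1 := by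
  have hEE : single p q (1 : K) * single p q 1 = 0 := single_mul_single_of_ne _ _ _ _ hpq.symm _
  simp only [Ring.lie_def, mul_sub, sub_mul, ← mul_assoc]
  rw [hEE, mul_assoc X, hEE, single_mul_mul_single]
  ext i j
  simp only [Matrix.sub_apply, Matrix.smul_apply, single_apply, zero_mul, mul_zero]
  split_ifs <;> simp; ring

lemma lie_single_single_of_ne {p q r : ι} (hrq : r ≠ q) :
    ⁅single r p (1 : K), single p q (1 : K)⁆ = single r q 1 := by
  rw [Ring.lie_def, single_mul_single_same, single_mul_single_of_ne _ _ _ _ hrq.symm,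
    sub_zero, one_mul]

lemma lie_single_single_swap (p q : ι) :
    ⁅single p q (1 : K), single q p (1 : K)⁆ = single p p 1 - single q q 1 := by
  rw [Ring.lie_def, single_mul_single_same, single_mul_single_same, one_mul]

omit [DecidableEq ι] in
lemma trace_eq_zero_of_transpose_eq_neg [CharZero K] {A : Matrix ι ι K} (hA : Aᵀ = -A) :
    A.trace = 0 := by
  have h := congrArg trace hA
  rw [trace_transpose, trace_neg] at h
  exact CharZero.eq_neg_self_iff.mp h

lemma notMem_range_scalar_of_trace_eq_zero [CharZero K] {X : Matrix ι ι K} (hX : X ≠ 0)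
    (htr : X.trace = 0) : X ∉ Set.range (scalar ι) := by
  rintro ⟨c, rfl⟩
  rcases isEmpty_or_nonempty ι with hι | hι
  · exact hX (Subsingleton.elim _ _)
  · simp [Fintype.card_ne_zero] at htr
    simp [htr] at hX

lemma exists_ne_of_notMem_range_scalar {X : Matrix ι ι K}
    (hX : X ∉ Set.range (scalar ι)) : ∃ p q, p ≠ q ∧ (X q p ≠ 0 ∨ X p p ≠ X q q) := by
  by_contra! h
  rcases isEmpty_or_nonempty ι with hι | ⟨⟨i⟩⟩
  · exact hX ⟨0, Subsingleton.elim _ _⟩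
  · refine hX ⟨X i i, ext fun j k => ?_⟩
    obtain rfl | hjk := eq_or_ne j k
    · obtain rfl | hij := eq_or_ne i j
      · simp
      · simp [(h i j hij).2]
    · simp [diagonal_apply_ne _ hjk, (h k j hjk.symm).1]

lemma mem_of_trace_eq_zero_of_single_mem (U : Submodule K (Matrix ι ι K))
    (h_off : ∀ r s, r ≠ s → single r s (1 : K) ∈ U)
    (h_diag : ∀ r s, single r r (1 : K) - single s s 1 ∈ U)
    {A : Matrix ι ι K} (hA : A.trace = 0) : A ∈ U := by
  rcases isEmpty_or_nonempty ι with hι | ⟨⟨i⟩⟩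
  · simp [Subsingleton.elim A 0]
  suffices ∀ A : Matrix ι ι K, A - A.trace • single i i 1 ∈ U by
    simpa [hA] using this A
  intro A
  induction A using Matrix.induction_on' with
  | h_zero => simp
  | h_add A B hA hB =>
    rw [trace_add, add_smul, add_sub_add_comm]
    exact U.add_mem hA hB
  | h_std_basis r s x =>
    have hx (a b : ι) : single a b x = x • single a b (1 : K) := by simp [smul_single]
    obtain rfl | hrs := eq_or_ne r s
    · rw [trace_single_eq_same, hx, ← smul_sub]
      exact U.smul_mem x (h_diag r i)
    · rw [trace_single_eq_of_ne _ _ _ hrs, zero_smul, sub_zero, hx]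
      exact U.smul_mem x (h_off r s hrs)

variable {V : Submodule K (Matrix ι ι K)} (hV : ∀ P : Matrix ι ι K, ∀ X ∈ V, ⁅P, X⁆ ∈ V)
include hV

lemma single_mem_of_apply_ne_zero [NeZero (2 : K)] {X : Matrix ι ι K} (hX : X ∈ V) {p q : ι}
    (hpq : p ≠ q) (hXqp : X q p ≠ 0) : single p q (1 : K) ∈ V := by
  have h := hV (single p q 1) _ (hV (single p q 1) X hX)
  rw [lie_single_lie_single_self hpq] at h
  exact (V.smul_mem_iff (mul_ne_zero (neg_ne_zero.mpr two_ne_zero) hXqp)).mp h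

lemma exists_single_mem_of_notMem_range_scalar [NeZero (2 : K)] {X : Matrix ι ι K}
    (hX : X ∈ V) (hXs : X ∉ Set.range (scalar ι)) : ∃ p q, p ≠ q ∧ single p q (1 : K) ∈ V := by
  obtain ⟨p, q, hpq, hXqp | hXpq⟩ := exists_ne_of_notMem_range_scalar hXs
  · exact ⟨p, q, hpq, single_mem_of_apply_ne_zero hV hX hpq hXqp⟩
  · refine ⟨q, p, hpq.symm, single_mem_of_apply_ne_zero hV (hV (single p q 1) X hX) hpq.symm ?_⟩
    simpa [Ring.lie_def, sub_eq_zero] using hXpq.symm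

lemma single_mem_of_single_mem [NeZero (2 : K)] {p q : ι} (hpq : p ≠ q)
    (hE : single p q (1 : K) ∈ V) {r s : ι} (hrs : r ≠ s) : single r s (1 : K) ∈ V := by
  have row {a b c : ι} (hcb : c ≠ b) (h : single a b (1 : K) ∈ V) : single c b (1 : K) ∈ V :=
    lie_single_single_of_ne (K := K) hcb ▸ hV _ _ h
  have flip {a b : ι} (hab : a ≠ b) (h : single a b (1 : K) ∈ V) : single b a (1 : K) ∈ V :=
    single_mem_of_apply_ne_zero hV h hab.symm (by simp)
  obtain rfl | hsq := eq_or_ne s q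
  · exact row hrs hE
  · exact row hrs (flip hsq (row hsq hE))

theorem mem_of_trace_eq_zero_of_notMem_range_scalar [NeZero (2 : K)] {X : Matrix ι ι K}
    (hX : X ∈ V) (hXs : X ∉ Set.range (scalar ι)) {A : Matrix ι ι K} (hA : A.trace = 0) :
    A ∈ V := by
  obtain ⟨p, q, hpq, hE⟩ := exists_single_mem_of_notMem_range_scalar hV hX hXs
  have h_off (r s : ι) (hrs : r ≠ s) := single_mem_of_single_mem hV hpq hE hrs
  refine mem_of_trace_eq_zero_of_single_mem V h_off (fun r s => ?_) hA
  obtain rfl | hrs := eq_or_ne r s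
  · simp
  · exact lie_single_single_swap (K := K) r s ▸ hV _ _ (h_off s r hrs.symm)

end GeneralLinear

variable {n : ℕ}

def sp (n : ℕ) : Set (Matrix (Fin n ⊕ Fin n) (Fin n ⊕ Fin n) ℂ) :=
  {X | Xᵀ * stdJ n + stdJ n * X = 0}

lemma fromBlocks_mem_sp {A B C : Matrix (Fin n) (Fin n) ℂ} (hB : Bᵀ = B) (hC : Cᵀ = C) :
    fromBlocks A B C (-Aᵀ) ∈ sp n := by
  simp [sp, stdJ, fromBlocks_transpose, fromBlocks_multiply, fromBlocks_add, hB, hC]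

/-- For skew `B`, `C` these are the matrices `X` with `Xᵀ J₀ = J₀ X`, a complement of `sp n`. -/
def mBlocks (A B C : Matrix (Fin n) (Fin n) ℂ) : Matrix (Fin n ⊕ Fin n) (Fin n ⊕ Fin n) ℂ :=
  fromBlocks A B C Aᵀ

def sl2E (n : ℕ) : Matrix (Fin n ⊕ Fin n) (Fin n ⊕ Fin n) ℂ := fromBlocks 0 1 0 0

def sl2F (n : ℕ) : Matrix (Fin n ⊕ Fin n) (Fin n ⊕ Fin n) ℂ := fromBlocks 0 0 1 0

lemma sl2E_mem_sp : sl2E n ∈ sp n := by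
  simpa [sl2E] using fromBlocks_mem_sp (A := 0) transpose_one transpose_zero

lemma sl2F_mem_sp : sl2F n ∈ sp n := by
  simpa [sl2F] using fromBlocks_mem_sp (A := 0) transpose_zero transpose_one

lemma lie_sl2E_mBlocks {A B C : Matrix (Fin n) (Fin n) ℂ} (hC : Cᵀ = -C) :
    ⁅sl2E n, mBlocks A B C⁆ = mBlocks C (Aᵀ - A) 0 := by
  rw [Ring.lie_def, sl2E, mBlocks, mBlocks, fromBlocks_multiply, fromBlocks_multiply,
    sub_eq_add_neg, fromBlocks_neg, fromBlocks_add]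
  simp [hC, sub_eq_add_neg]

lemma lie_sl2F_mBlocks {A B C : Matrix (Fin n) (Fin n) ℂ} (hB : Bᵀ = -B) :
    ⁅sl2F n, mBlocks A B C⁆ = mBlocks (-B) 0 (A - Aᵀ) := by
  rw [Ring.lie_def, sl2F, mBlocks, mBlocks, fromBlocks_multiply, fromBlocks_multiply,
    sub_eq_add_neg, fromBlocks_neg, fromBlocks_add]
  simp [hB, sub_eq_add_neg]

lemma lie_diag_mBlocks (P A : Matrix (Fin n) (Fin n) ℂ) :
    ⁅fromBlocks P 0 0 (-Pᵀ), mBlocks A 0 0⁆ = mBlocks ⁅P, A⁆ 0 0 := by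
  rw [Ring.lie_def, Ring.lie_def, mBlocks, mBlocks, fromBlocks_multiply, fromBlocks_multiply,
    sub_eq_add_neg, fromBlocks_neg, fromBlocks_add]
  simp [sub_eq_add_neg, transpose_mul, add_comm]

lemma trace_fromBlocks (A B C D : Matrix (Fin n) (Fin n) ℂ) :
    (fromBlocks A B C D).trace = A.trace + D.trace := by
  simp [trace, Fintype.sum_sum_type]

lemma exists_mem_sp_add_mBlocks (X : Matrix (Fin n ⊕ Fin n) (Fin n ⊕ Fin n) ℂ) :
    ∃ S ∈ sp n, ∃ A B C : Matrix (Fin n) (Fin n) ℂ,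
      Bᵀ = -B ∧ Cᵀ = -C ∧ X.trace = 2 * A.trace ∧ X = S + mBlocks A B C := by
  obtain ⟨P, Q, R, T, rfl⟩ : ∃ P Q R T, X = fromBlocks P Q R T :=
    ⟨_, _, _, _, (fromBlocks_toBlocks X).symm⟩
  refine ⟨fromBlocks ((2⁻¹ : ℂ) • (P - Tᵀ)) ((2⁻¹ : ℂ) • (Q + Qᵀ)) ((2⁻¹ : ℂ) • (R + Rᵀ))
      (-((2⁻¹ : ℂ) • (P - Tᵀ))ᵀ), fromBlocks_mem_sp ?_ ?_,
    (2⁻¹ : ℂ) • (P + Tᵀ), (2⁻¹ : ℂ) • (Q - Qᵀ), (2⁻¹ : ℂ) • (R - Rᵀ), ?_, ?_, ?_, ?_⟩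
  · simp [add_comm]
  · simp [add_comm]
  · simp; module
  · simp; module
  · simp [trace_fromBlocks]; ring
  · rw [mBlocks, fromBlocks_add]
    congr 1 <;> simp <;> module

def mBlocksDiagₗ : Matrix (Fin n) (Fin n) ℂ →ₗ[ℂ] Matrix (Fin n ⊕ Fin n) (Fin n ⊕ Fin n) ℂ where
  toFun A := mBlocks A 0 0
  map_add' A B := by simp [mBlocks, fromBlocks_add]
  map_smul' c A := by simp [mBlocks, fromBlocks_smul]

section Stable

variable {W : Submodule ℂ (Matrix (Fin n ⊕ Fin n) (Fin n ⊕ Fin n) ℂ)}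
  (hW : ∀ S ∈ sp n, ∀ Y ∈ W, ⁅S, Y⁆ ∈ W)
include hW

lemma lie_mem_comap_mBlocksDiagₗ (P : Matrix (Fin n) (Fin n) ℂ) :
    ∀ X ∈ W.comap mBlocksDiagₗ, ⁅P, X⁆ ∈ W.comap mBlocksDiagₗ := fun X hX => by
  change mBlocks ⁅P, X⁆ 0 0 ∈ W
  rw [← lie_diag_mBlocks]
  exact hW _ (fromBlocks_mem_sp transpose_zero transpose_zero) _ hX

lemma exists_mBlocks_mem_notMem_range_scalar {A B C : Matrix (Fin n) (Fin n) ℂ}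
    (hB : Bᵀ = -B) (hC : Cᵀ = -C) (hA : A.trace = 0) (hZ : mBlocks A B C ∈ W)
    (hZ0 : mBlocks A B C ≠ 0) : ∃ X, mBlocks X 0 0 ∈ W ∧ X ∉ Set.range (scalar (Fin n)) := by
  -- `(ad sl2F)²` keeps only the `B`-block (moved to `C`), `(ad sl2E)²` only the `C`-block.
  by_cases hC0 : C = 0
  · by_cases hB0 : B = 0
    · subst hB0 hC0
      refine ⟨A, hZ, notMem_range_scalar_of_trace_eq_zero ?_ hA⟩
      rintro rfl
      simp [mBlocks] at hZ0
    · have h := hW _ sl2E_mem_sp _ (hW _ sl2F_mem_sp _ (hW _ sl2F_mem_sp _ hZ))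
      rw [lie_sl2F_mBlocks hB, lie_sl2F_mBlocks (by simp), lie_sl2E_mBlocks (by simp)] at h
      refine ⟨(-2 : ℂ) • B, ?_, ?_⟩
      · convert h using 2
        · simp [hB]; module
        · simp
      · exact notMem_range_scalar_of_trace_eq_zero (smul_ne_zero (by norm_num) hB0)
          (by simp [trace_eq_zero_of_transpose_eq_neg hB])
  · have h := hW _ sl2F_mem_sp _ (hW _ sl2E_mem_sp _ (hW _ sl2E_mem_sp _ hZ))
    rw [lie_sl2E_mBlocks hC, lie_sl2E_mBlocks (by simp), lie_sl2F_mBlocks (by simp)] at h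
    refine ⟨(2 : ℂ) • C, ?_, ?_⟩
    · convert h using 2
      · simp [hC]; module
      · simp
    · exact notMem_range_scalar_of_trace_eq_zero (smul_ne_zero (by norm_num) hC0)
        (by simp [trace_eq_zero_of_transpose_eq_neg hC])

lemma mBlocks_mem_of_trace_eq_zero
    (hsl : ∀ X : Matrix (Fin n) (Fin n) ℂ, X.trace = 0 → mBlocks X 0 0 ∈ W)
    {A B C : Matrix (Fin n) (Fin n) ℂ} (hB : Bᵀ = -B) (hC : Cᵀ = -C) (hA : A.trace = 0) :
    mBlocks A B C ∈ W := by
  have hBW : mBlocks 0 B 0 ∈ W := by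
    have h := hW _ sl2E_mem_sp _
      (hsl ((-2⁻¹ : ℂ) • B) (by simp [trace_eq_zero_of_transpose_eq_neg hB]))
    rw [lie_sl2E_mBlocks (by simp)] at h
    convert h using 2
    simp [hB]; module
  have hCW : mBlocks 0 0 C ∈ W := by
    have h := hW _ sl2F_mem_sp _
      (hsl ((2⁻¹ : ℂ) • C) (by simp [trace_eq_zero_of_transpose_eq_neg hC]))
    rw [lie_sl2F_mBlocks (by simp)] at h
    convert h using 2
    · simp
    · simp [hC]; module
  have hsplit : mBlocks A B C = mBlocks A 0 0 + mBlocks 0 B 0 + mBlocks 0 0 C := by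
    simp [mBlocks, fromBlocks_add]
  rw [hsplit]
  exact add_mem (add_mem (hsl A hA) hBW) hCW

end Stable

end SlSp

theorem sl_div_sp_irreducible_general
    (n : ℕ)
    (W : Submodule ℂ (Matrix (Fin n ⊕ Fin n) (Fin n ⊕ Fin n) ℂ))
    (hWsl : (W : Set _) ⊆ {X : Matrix (Fin n ⊕ Fin n) (Fin n ⊕ Fin n) ℂ |
        X.trace = 0})
    (hspW : {X : Matrix (Fin n ⊕ Fin n) (Fin n ⊕ Fin n) ℂ |
        Xᵀ * stdJ n + stdJ n * X = 0} ⊆ (W : Set _))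
    (hstable : ∀ X : Matrix (Fin n ⊕ Fin n) (Fin n ⊕ Fin n) ℂ,
        Xᵀ * stdJ n + stdJ n * X = 0 → ∀ Y ∈ W, X * Y - Y * X ∈ W) :
    (W : Set _) = {X : Matrix (Fin n ⊕ Fin n) (Fin n ⊕ Fin n) ℂ |
        Xᵀ * stdJ n + stdJ n * X = 0} ∨
    (W : Set _) = {X : Matrix (Fin n ⊕ Fin n) (Fin n ⊕ Fin n) ℂ | X.trace = 0} := by
  open SlSp in
  have hW : ∀ S ∈ sp n, ∀ Y ∈ W, ⁅S, Y⁆ ∈ W := fun S hS Y hY => by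
    rw [Ring.lie_def]; exact hstable S hS Y hY
  by_cases hWsp : (W : Set _) ⊆ sp n
  · exact Or.inl (hWsp.antisymm hspW)
  refine Or.inr (hWsl.antisymm fun X hX => ?_)
  obtain ⟨Y, hYW, hYsp⟩ := Set.not_subset.mp hWsp
  obtain ⟨S, hS, A, B, C, hB, hC, htrY, rfl⟩ := exists_mem_sp_add_mBlocks Y
  have hZ : mBlocks A B C ∈ W := by simpa using W.sub_mem hYW (hspW hS)
  have hZ0 : mBlocks A B C ≠ 0 := by
    intro h
    exact hYsp (by simpa [h] using hS)
  have hA : A.trace = 0 := (mul_eq_zero.mp (htrY ▸ hWsl hYW)).resolve_left two_ne_zero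
  obtain ⟨X₀, hX₀, hX₀s⟩ := exists_mBlocks_mem_notMem_range_scalar hW hB hC hA hZ hZ0
  have hsl (A' : Matrix (Fin n) (Fin n) ℂ) (hA' : A'.trace = 0) : mBlocks A' 0 0 ∈ W :=
    mem_of_trace_eq_zero_of_notMem_range_scalar (lie_mem_comap_mBlocksDiagₗ hW) hX₀ hX₀s hA'
  obtain ⟨S', hS', A', B', C', hB', hC', htrX, rfl⟩ := exists_mem_sp_add_mBlocks X
  have hA' : A'.trace = 0 := (mul_eq_zero.mp (htrX ▸ hX)).resolve_left two_ne_zero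
  exact W.add_mem (hspW hS') (mBlocks_mem_of_trace_eq_zero hW hsl hB' hC' hA')

/-- For `n ≥ 1`, every complex linear subspace `W` of `sl(2n, ℂ)`
containing `sp(2n, ℂ)` and stable under the adjoint action of `sp(2n, ℂ)`
(`[X, Y] = XY − YX ∈ W` for all `X ∈ sp(2n, ℂ)`, `Y ∈ W`) equals `sp(2n, ℂ)` or
`sl(2n, ℂ)`.  (For `n ≥ 2` this says that `sl(2n, ℂ)/sp(2n, ℂ)` with the adjoint
action is an irreducible `sp(2n, ℂ)`-module.) -/
theorem sl_div_sp_irreducible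
    (n : ℕ) (hn : 1 ≤ n)
    (W : Submodule ℂ (Matrix (Fin n ⊕ Fin n) (Fin n ⊕ Fin n) ℂ))
    (hWsl : (W : Set _) ⊆ {X : Matrix (Fin n ⊕ Fin n) (Fin n ⊕ Fin n) ℂ |
        X.trace = 0})
    (hspW : {X : Matrix (Fin n ⊕ Fin n) (Fin n ⊕ Fin n) ℂ |
        Xᵀ * stdJ n + stdJ n * X = 0} ⊆ (W : Set _))
    (hstable : ∀ X : Matrix (Fin n ⊕ Fin n) (Fin n ⊕ Fin n) ℂ,
        Xᵀ * stdJ n + stdJ n * X = 0 → ∀ Y ∈ W, X * Y - Y * X ∈ W) :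
    (W : Set _) = {X : Matrix (Fin n ⊕ Fin n) (Fin n ⊕ Fin n) ℂ |
        Xᵀ * stdJ n + stdJ n * X = 0} ∨
    (W : Set _) = {X : Matrix (Fin n ⊕ Fin n) (Fin n ⊕ Fin n) ℂ | X.trace = 0} :=
  sl_div_sp_irreducible_general n W hWsl hspW hstable
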